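/- Assume |f(t,u,v)| ≤ M on D_M, the Lipschitz conditions |f(t,u2,v2) − f(t,u1,v1)| ≤ L1|u2 − u1| + L2|v2 − v1| on D_M, and q := (L1 + L2) M0 < 1. Then the operator equation Aψ = ψ has exactly one solution ψ in the closed ball B[0,M] = {ψ ∈ C[0,a] : ‖ψ‖ ≤ M}, and for the iterates ψ_0(t) = f(t,0,0), ψ_{k+1} = Aψ_k, one has ‖ψ_k − ψ‖ ≤ (q^k/(1 − q)) ‖ψ_1 − ψ_0‖ for every k ≥ 0. -/

import Mathlib

open Set MeasureTheory

/-- `u_ψ(t) = g(t) + ∫₀ᵃ G(t,s) ψ(s) ds`. -/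
noncomputable def uOf (a : ℝ) (G : ℝ → ℝ → ℝ) (g : ℝ → ℝ) (ψ : ℝ → ℝ) (t : ℝ) : ℝ :=
  g t + ∫ s in (0:ℝ)..a, G t s * ψ s

/-- The iteration `ψ₀(t) = f(t,0,0)`, `ψ_{k+1} = Aψ_k`, where
`(Aψ)(t) = f(t, u_ψ(t), u_ψ(φ(t)))`. -/
noncomputable def psiIter (a : ℝ) (G : ℝ → ℝ → ℝ) (g : ℝ → ℝ) (f : ℝ → ℝ → ℝ → ℝ)
    (φ : ℝ → ℝ) : ℕ → ℝ → ℝ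
  | 0 => fun t => f t 0 0
  | k + 1 => fun t =>
      f t (uOf a G g (psiIter a G g f φ k) t) (uOf a G g (psiIter a G g f φ k) (φ t))

/-!
The operator `A` maps the ball `B[0,M]` of `C[0,a]` into itself, because `|u_ψ| ≤ ‖g‖ + M0 M`
keeps the arguments of `f` inside `D_M`, and the Lipschitz condition together with
`|u_ψ - u_ζ| ≤ M0 ‖ψ - ζ‖` makes it a `q`-contraction there. The ball is complete, so Banach's
fixed point theorem gives the unique solution and the a priori estimate for the iterates.
-/

theorem abs_intervalIntegral_mul_le {k ψ : ℝ → ℝ} {a b K C : ℝ} (hab : a ≤ b)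
    (hk : IntervalIntegrable k volume a b) (hkK : ∫ s in a..b, |k s| ≤ K)
    (hψ : ∀ s ∈ Icc a b, |ψ s| ≤ C) : |∫ s in a..b, k s * ψ s| ≤ K * C := by
  have hC : 0 ≤ C := (abs_nonneg _).trans (hψ a (left_mem_Icc.2 hab))
  calc |∫ s in a..b, k s * ψ s| ≤ ∫ s in a..b, |k s| * C := by
        refine intervalIntegral.norm_integral_le_of_norm_le (f := fun s => k s * ψ s) hab
          (ae_of_all _ fun s hs => ?_) (hk.abs.mul_const C)
        rw [Real.norm_eq_abs, abs_mul]
        exact mul_le_mul_of_nonneg_left (hψ s (Ioc_subset_Icc_self hs)) (abs_nonneg _)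
    _ = (∫ s in a..b, |k s|) * C := intervalIntegral.integral_mul_const _ _
    _ ≤ K * C := mul_le_mul_of_nonneg_right hkK hC

theorem continuousOn_intervalIntegral_of_continuousOn_prod {k : ℝ → ℝ → ℝ} {a b c d : ℝ}
    (hab : a ≤ b) (hcd : c ≤ d) (hk : ContinuousOn (Function.uncurry k) (Icc c d ×ˢ Icc a b)) :
    ContinuousOn (fun t => ∫ s in a..b, k t s) (Icc c d) := by
  set k' : ℝ → ℝ → ℝ := fun t s => k (projIcc c d hcd t) (projIcc a b hab s)
  have hk' : Continuous (Function.uncurry k') :=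
    hk.comp_continuous
      (f := fun p : ℝ × ℝ => ((projIcc c d hcd p.1 : ℝ), (projIcc a b hab p.2 : ℝ)))
      (by fun_prop) fun p => ⟨(projIcc c d hcd p.1).2, (projIcc a b hab p.2).2⟩
  refine (intervalIntegral.continuous_parametric_intervalIntegral_of_continuous' hk' a b
    ).continuousOn.congr fun t ht => intervalIntegral.integral_congr fun s hs => ?_
  rw [uIcc_of_le hab] at hs
  simp [k', projIcc_of_mem hcd ht, projIcc_of_mem hab hs]

namespace ContinuousOn

variable {α : Type*} [TopologicalSpace α] {S : Set α} {ψ ζ : α → ℝ}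

def toContinuousMap (hψ : ContinuousOn ψ S) : C(S, ℝ) :=
  ⟨S.domRestrict ψ, hψ.domRestrict⟩

@[simp]
theorem toContinuousMap_apply (hψ : ContinuousOn ψ S) (x : S) : hψ.toContinuousMap x = ψ x :=
  rfl

theorem toContinuousMap_congr (hψ : ContinuousOn ψ S)
    (hζ : ContinuousOn ζ S) (h : EqOn ψ ζ S) : hψ.toContinuousMap = hζ.toContinuousMap :=
  ContinuousMap.ext fun x => h x.2

theorem eqOn_of_toContinuousMap_eq (hψ : ContinuousOn ψ S)
    (hζ : ContinuousOn ζ S) (h : hψ.toContinuousMap = hζ.toContinuousMap) : EqOn ψ ζ S :=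
  fun t ht => DFunLike.congr_fun h ⟨t, ht⟩

variable [CompactSpace S]

theorem toContinuousMap_mem_closedBall_iff (hψ : ContinuousOn ψ S) {M : ℝ} (hM : 0 ≤ M) :
    hψ.toContinuousMap ∈ Metric.closedBall 0 M ↔ ∀ t ∈ S, |ψ t| ≤ M := by
  simp [ContinuousMap.norm_le _ hM, Real.norm_eq_abs]

theorem dist_toContinuousMap_le_iff (hψ : ContinuousOn ψ S) (hζ : ContinuousOn ζ S) {D : ℝ}
    (hD : 0 ≤ D) : dist hψ.toContinuousMap hζ.toContinuousMap ≤ D ↔ ∀ t ∈ S, |ψ t - ζ t| ≤ D := by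
  simp [ContinuousMap.dist_le hD, Real.dist_eq]

theorem abs_sub_le_dist_toContinuousMap (hψ : ContinuousOn ψ S) (hζ : ContinuousOn ζ S)
    {t : α} (ht : t ∈ S) : |ψ t - ζ t| ≤ dist hψ.toContinuousMap hζ.toContinuousMap :=
  ContinuousMap.dist_apply_le_dist (f := hψ.toContinuousMap) (g := hζ.toContinuousMap) ⟨t, ht⟩

end ContinuousOn

section ExtendByZero

variable {α : Type*} [TopologicalSpace α] {S : Set α}

theorem continuousOn_extend_val (F : C(S, ℝ)) :
    ContinuousOn (Function.extend Subtype.val F 0) S :=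
  continuousOn_iff_continuous_domRestrict.2 <| by
    convert F.continuous using 1
    exact funext (Subtype.val_injective.extend_apply _ _)

theorem ContinuousOn.toContinuousMap_extend_val (F : C(S, ℝ)) :
    (continuousOn_extend_val F).toContinuousMap = F :=
  ContinuousMap.ext (Subtype.val_injective.extend_apply _ _)

theorem exists_toContinuousMap_eq (F : C(S, ℝ)) :
    ∃ ψ : α → ℝ, ∃ hψ : ContinuousOn ψ S, hψ.toContinuousMap = F :=
  ⟨_, _, ContinuousOn.toContinuousMap_extend_val F⟩

end ExtendByZero

structure IsContractionOnBall {α : Type*} [TopologicalSpace α] (S : Set α) (M q : ℝ)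
    (A : (α → ℝ) → α → ℝ) : Prop where
  eqOn_of_eqOn : ∀ ψ ζ, EqOn ψ ζ S → EqOn (A ψ) (A ζ) S
  continuousOn : ∀ ψ, ContinuousOn ψ S → ContinuousOn (A ψ) S
  abs_le : ∀ ψ, ContinuousOn ψ S → (∀ t ∈ S, |ψ t| ≤ M) → ∀ t ∈ S, |A ψ t| ≤ M
  abs_sub_le : ∀ ψ ζ, ContinuousOn ψ S → ContinuousOn ζ S → (∀ t ∈ S, |ψ t| ≤ M) →
    (∀ t ∈ S, |ζ t| ≤ M) → ∀ D, (∀ t ∈ S, |ψ t - ζ t| ≤ D) → ∀ t ∈ S, |A ψ t - A ζ t| ≤ q * D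

namespace IsContractionOnBall

variable {α : Type*} [TopologicalSpace α] {S : Set α} {M q : ℝ} {A : (α → ℝ) → α → ℝ}
  {ψ : α → ℝ}

/-- `A` as a self-map of `C(S, ℝ)`; by `eqOn_of_eqOn`, extending by zero off `S` is immaterial. -/
noncomputable def lift (hA : IsContractionOnBall S M q A) (F : C(S, ℝ)) : C(S, ℝ) :=
  (hA.continuousOn _ (continuousOn_extend_val F)).toContinuousMap

theorem lift_toContinuousMap (hA : IsContractionOnBall S M q A) (hψ : ContinuousOn ψ S) :
    hA.lift hψ.toContinuousMap = (hA.continuousOn ψ hψ).toContinuousMap :=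
  ContinuousOn.toContinuousMap_congr _ _ <| hA.eqOn_of_eqOn _ _ <|
    (continuousOn_extend_val _).eqOn_of_toContinuousMap_eq hψ
      (ContinuousOn.toContinuousMap_extend_val _)

theorem continuousOn_iterate (hA : IsContractionOnBall S M q A) (hψ : ContinuousOn ψ S)
    (k : ℕ) : ContinuousOn (A^[k] ψ) S := by
  induction k with
  | zero => exact hψ
  | succ k ih => rw [Function.iterate_succ_apply']; exact hA.continuousOn _ ih

theorem iterate_lift_toContinuousMap (hA : IsContractionOnBall S M q A)
    (hψ : ContinuousOn ψ S) (k : ℕ) :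
    hA.lift^[k] hψ.toContinuousMap = (hA.continuousOn_iterate hψ k).toContinuousMap := by
  induction k with
  | zero => rfl
  | succ k ih =>
    rw [Function.iterate_succ_apply', ih, lift_toContinuousMap]
    exact ContinuousOn.toContinuousMap_congr _ _ fun t _ => by rw [Function.iterate_succ_apply']

variable [CompactSpace S]

theorem mapsTo_lift (hA : IsContractionOnBall S M q A) (hM : 0 ≤ M) :
    MapsTo hA.lift (Metric.closedBall 0 M) (Metric.closedBall 0 M) := by
  intro F hF
  obtain ⟨ψ, hψ, rfl⟩ := exists_toContinuousMap_eq F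
  rw [hψ.toContinuousMap_mem_closedBall_iff hM] at hF
  rw [lift_toContinuousMap, ContinuousOn.toContinuousMap_mem_closedBall_iff _ hM]
  exact hA.abs_le ψ hψ hF

theorem dist_lift_le (hA : IsContractionOnBall S M q A) (hM : 0 ≤ M) (hq : 0 ≤ q)
    {F F' : C(S, ℝ)} (hF : F ∈ Metric.closedBall 0 M) (hF' : F' ∈ Metric.closedBall 0 M) :
    dist (hA.lift F) (hA.lift F') ≤ q * dist F F' := by
  obtain ⟨ψ, hψ, rfl⟩ := exists_toContinuousMap_eq F
  obtain ⟨ζ, hζ, rfl⟩ := exists_toContinuousMap_eq F'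
  rw [hψ.toContinuousMap_mem_closedBall_iff hM] at hF
  rw [hζ.toContinuousMap_mem_closedBall_iff hM] at hF'
  rw [lift_toContinuousMap, lift_toContinuousMap,
    ContinuousOn.dist_toContinuousMap_le_iff _ _ (mul_nonneg hq dist_nonneg)]
  exact hA.abs_sub_le ψ ζ hψ hζ hF hF' _ fun t ht => hψ.abs_sub_le_dist_toContinuousMap hζ ht

theorem exists_fixedPoint (hA : IsContractionOnBall S M q A) (hM : 0 ≤ M)
    (hq0 : 0 ≤ q) (hq1 : q < 1) :
    ∃ ψ : α → ℝ, (ContinuousOn ψ S ∧ (∀ t ∈ S, |ψ t| ≤ M) ∧ EqOn ψ (A ψ) S) ∧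
      (∀ ψ' : α → ℝ, ContinuousOn ψ' S ∧ (∀ t ∈ S, |ψ' t| ≤ M) ∧ EqOn ψ' (A ψ') S →
        EqOn ψ' ψ S) ∧
      ∀ ψ₀ : α → ℝ, ContinuousOn ψ₀ S → (∀ t ∈ S, |ψ₀ t| ≤ M) →
        ∀ d, (∀ t ∈ S, |A ψ₀ t - ψ₀ t| ≤ d) →
        ∀ k : ℕ, ∀ t ∈ S, |A^[k] ψ₀ t - ψ t| ≤ q ^ k / (1 - q) * d := by
  set B := Metric.closedBall (0 : C(S, ℝ)) M
  have : CompleteSpace B := Metric.isClosed_closedBall.completeSpace_coe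
  have : Nonempty B := ⟨⟨0, Metric.mem_closedBall_self hM⟩⟩
  set T := (hA.mapsTo_lift hM).restrict
  have hT : ContractingWith ⟨q, hq0⟩ T :=
    ⟨hq1, LipschitzWith.of_dist_le_mul fun F F' => hA.dist_lift_le hM hq0 F.2 F'.2⟩
  obtain ⟨ψ, hψ, hΦ⟩ := exists_toContinuousMap_eq (hT.fixedPoint T).1
  have hψM : ∀ t ∈ S, |ψ t| ≤ M :=
    (hψ.toContinuousMap_mem_closedBall_iff hM).1 (hΦ ▸ (hT.fixedPoint T).2)
  refine ⟨ψ, ⟨hψ, hψM, ?fixed⟩, ?unique, ?estimate⟩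
  case fixed =>
    have hfix : hA.lift hψ.toContinuousMap = hψ.toContinuousMap := by
      rw [hΦ]; exact congrArg Subtype.val hT.fixedPoint_isFixedPt
    rw [lift_toContinuousMap] at hfix
    exact hψ.eqOn_of_toContinuousMap_eq _ hfix.symm
  case unique =>
    rintro ψ' ⟨hψ', hψ'M, hfix⟩
    have hmem := (hψ'.toContinuousMap_mem_closedBall_iff hM).2 hψ'M
    have hfix' : T ⟨_, hmem⟩ = ⟨_, hmem⟩ :=
      Subtype.ext <| (lift_toContinuousMap hA hψ').trans <|
        (hA.continuousOn ψ' hψ').toContinuousMap_congr hψ' hfix.symm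
    refine hψ'.eqOn_of_toContinuousMap_eq hψ ?_
    rw [hΦ, ← hT.fixedPoint_unique hfix']
  case estimate =>
    intro ψ₀ hψ₀ hψ₀M d hd k t ht
    set X₀ : B := ⟨_, (hψ₀.toContinuousMap_mem_closedBall_iff hM).2 hψ₀M⟩
    have hstep : dist X₀ (T X₀) ≤ d := by
      rw [Subtype.dist_eq, dist_comm, MapsTo.val_restrict_apply, lift_toContinuousMap]
      exact (ContinuousOn.dist_toContinuousMap_le_iff _ hψ₀ ((abs_nonneg _).trans (hd t ht))).2 hd
    have hiter : |A^[k] ψ₀ t - ψ t| ≤ dist (T^[k] X₀) (hT.fixedPoint T) := by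
      rw [Subtype.dist_eq, MapsTo.coe_iterate_restrict, iterate_lift_toContinuousMap, ← hΦ]
      exact ContinuousOn.abs_sub_le_dist_toContinuousMap _ hψ ht
    calc |A^[k] ψ₀ t - ψ t| ≤ dist X₀ (T X₀) * q ^ k / (1 - q) :=
          hiter.trans (hT.apriori_dist_iterate_fixedPoint_le X₀ k)
      _ ≤ d * q ^ k / (1 - q) := by gcongr
      _ = q ^ k / (1 - q) * d := by ring

end IsContractionOnBall

section uOf

variable {a M0 ng M D t : ℝ} {G : ℝ → ℝ → ℝ} {g ψ ζ : ℝ → ℝ}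

theorem uOf_congr (ha : 0 ≤ a) (h : EqOn ψ ζ (Icc 0 a)) : uOf a G g ψ = uOf a G g ζ := by
  funext t
  refine congrArg (g t + ·) (intervalIntegral.integral_congr fun s hs => ?_)
  rw [uIcc_of_le ha] at hs
  simp only [h hs]

theorem continuousOn_uOf (ha : 0 ≤ a)
    (hG : ContinuousOn (fun p : ℝ × ℝ => G p.1 p.2) (Icc 0 a ×ˢ Icc 0 a))
    (hg : ContinuousOn g (Icc 0 a)) (hψ : ContinuousOn ψ (Icc 0 a)) :
    ContinuousOn (uOf a G g ψ) (Icc 0 a) :=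
  hg.add <| continuousOn_intervalIntegral_of_continuousOn_prod ha ha <|
    hG.mul (hψ.comp continuousOn_snd fun _ hp => hp.2)

theorem abs_uOf_le (ha : 0 ≤ a) (hG : IntervalIntegrable (G t) volume 0 a)
    (hGM : ∫ s in (0:ℝ)..a, |G t s| ≤ M0) (hg : |g t| ≤ ng) (hψ : ∀ s ∈ Icc 0 a, |ψ s| ≤ M) :
    |uOf a G g ψ t| ≤ ng + M0 * M :=
  (abs_add_le _ _).trans (add_le_add hg (abs_intervalIntegral_mul_le ha hG hGM hψ))

theorem abs_uOf_sub_uOf_le (ha : 0 ≤ a) (hG : ContinuousOn (G t) (Icc 0 a))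
    (hGM : ∫ s in (0:ℝ)..a, |G t s| ≤ M0) (hψ : ContinuousOn ψ (Icc 0 a))
    (hζ : ContinuousOn ζ (Icc 0 a)) (hD : ∀ s ∈ Icc 0 a, |ψ s - ζ s| ≤ D) :
    |uOf a G g ψ t - uOf a G g ζ t| ≤ M0 * D := by
  have hsub : uOf a G g ψ t - uOf a G g ζ t = ∫ s in (0:ℝ)..a, G t s * (ψ s - ζ s) := by
    simp only [uOf, add_sub_add_left_eq_sub, mul_sub]
    exact (intervalIntegral.integral_sub ((hG.mul hψ).intervalIntegrable_of_Icc ha)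
      ((hG.mul hζ).intervalIntegrable_of_Icc ha)).symm
  rw [hsub]
  exact abs_intervalIntegral_mul_le ha (hG.intervalIntegrable_of_Icc ha) hGM hD

end uOf

noncomputable def opA (a : ℝ) (G : ℝ → ℝ → ℝ) (g : ℝ → ℝ) (f : ℝ → ℝ → ℝ → ℝ) (φ : ℝ → ℝ)
    (ψ : ℝ → ℝ) (t : ℝ) : ℝ :=
  f t (uOf a G g ψ t) (uOf a G g ψ (φ t))

theorem psiIter_eq_iterate_opA (a : ℝ) (G : ℝ → ℝ → ℝ) (g : ℝ → ℝ) (f : ℝ → ℝ → ℝ → ℝ)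
    (φ : ℝ → ℝ) (k : ℕ) : psiIter a G g f φ k = (opA a G g f φ)^[k] fun t => f t 0 0 := by
  induction k with
  | zero => rfl
  | succ k ih => rw [Function.iterate_succ_apply', ← ih]; rfl

theorem isContractionOnBall_opA {a M0 ng M L1 L2 : ℝ} {G : ℝ → ℝ → ℝ} {g : ℝ → ℝ}
    {f : ℝ → ℝ → ℝ → ℝ} {φ : ℝ → ℝ} (ha : 0 ≤ a) (hφc : ContinuousOn φ (Icc 0 a))
    (hφm : MapsTo φ (Icc 0 a) (Icc 0 a))
    (hG : ContinuousOn (fun p : ℝ × ℝ => G p.1 p.2) (Icc 0 a ×ˢ Icc 0 a))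
    (hg : ContinuousOn g (Icc 0 a)) (hM0 : ∀ t ∈ Icc (0:ℝ) a, ∫ s in (0:ℝ)..a, |G t s| ≤ M0)
    (hng : ∀ t ∈ Icc (0:ℝ) a, |g t| ≤ ng)
    (hfc : ContinuousOn (fun p : ℝ × ℝ × ℝ => f p.1 p.2.1 p.2.2)
      (Icc 0 a ×ˢ (univ : Set ℝ) ×ˢ (univ : Set ℝ)))
    (hbound : ∀ t ∈ Icc (0:ℝ) a, ∀ u v : ℝ,
      |u| ≤ ng + M0 * M → |v| ≤ ng + M0 * M → |f t u v| ≤ M)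
    (hL1 : 0 ≤ L1) (hL2 : 0 ≤ L2)
    (hLip : ∀ t ∈ Icc (0:ℝ) a, ∀ u1 u2 v1 v2 : ℝ,
      |u1| ≤ ng + M0 * M → |u2| ≤ ng + M0 * M →
      |v1| ≤ ng + M0 * M → |v2| ≤ ng + M0 * M →
      |f t u2 v2 - f t u1 v1| ≤ L1 * |u2 - u1| + L2 * |v2 - v1|) :
    IsContractionOnBall (Icc 0 a) M ((L1 + L2) * M0) (opA a G g f φ) := by
  have hGt : ∀ t ∈ Icc 0 a, ContinuousOn (G t) (Icc 0 a) :=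
    fun t ht => ContinuousOn.uncurry_left (f := G) t ht hG
  have hu_le : ∀ ψ : ℝ → ℝ, (∀ s ∈ Icc 0 a, |ψ s| ≤ M) →
      ∀ t ∈ Icc 0 a, |uOf a G g ψ t| ≤ ng + M0 * M := fun ψ hψ t ht =>
    abs_uOf_le ha ((hGt t ht).intervalIntegrable_of_Icc ha) (hM0 t ht) (hng t ht) hψ
  refine ⟨fun ψ ζ h t _ => ?_, fun ψ hψ => ?_, fun ψ _ hψ t ht => ?_,
    fun ψ ζ hψ hζ hψM hζM D hD t ht => ?_⟩
  · simp only [opA, uOf_congr ha h]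
  · have hu := continuousOn_uOf ha hG hg hψ
    exact hfc.comp (continuousOn_id.prodMk (hu.prodMk (hu.comp hφc hφm)))
      fun t ht => ⟨ht, trivial, trivial⟩
  · exact hbound t ht _ _ (hu_le ψ hψ t ht) (hu_le ψ hψ _ (hφm ht))
  · have hdiff : ∀ s ∈ Icc 0 a, |uOf a G g ψ s - uOf a G g ζ s| ≤ M0 * D := fun s hs =>
      abs_uOf_sub_uOf_le ha (hGt s hs) (hM0 s hs) hψ hζ hD
    calc |opA a G g f φ ψ t - opA a G g f φ ζ t|
        ≤ L1 * |uOf a G g ψ t - uOf a G g ζ t| + L2 * |uOf a G g ψ (φ t) - uOf a G g ζ (φ t)| :=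
          hLip t ht _ _ _ _ (hu_le ζ hζM t ht) (hu_le ψ hψM t ht) (hu_le ζ hζM _ (hφm ht))
            (hu_le ψ hψM _ (hφm ht))
      _ ≤ L1 * (M0 * D) + L2 * (M0 * D) := by
          gcongr
          exacts [hdiff t ht, hdiff _ (hφm ht)]
      _ = (L1 + L2) * M0 * D := by ring

/-- Under the boundedness, Lipschitz and contraction assumptions, the operator equation
`Aψ = ψ` has exactly one solution `ψ` in the ball `B[0,M]`, and the iterates
`ψ₀(t) = f(t,0,0)`, `ψ_{k+1} = Aψ_k` satisfy `‖ψ_k − ψ‖ ≤ (q^k/(1−q)) ‖ψ₁ − ψ₀‖`. -/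
theorem fixed_point_existence_and_geometric_convergence
    (a : ℝ) (ha : 0 < a)
    (φ : ℝ → ℝ) (hφc : ContinuousOn φ (Icc 0 a)) (hφm : MapsTo φ (Icc 0 a) (Icc 0 a))
    (G : ℝ → ℝ → ℝ)
    (hG : ContinuousOn (fun p : ℝ × ℝ => G p.1 p.2) (Icc 0 a ×ˢ Icc 0 a))
    (g : ℝ → ℝ) (hg : ContinuousOn g (Icc 0 a))
    (M0 : ℝ) (hM0 : IsGreatest ((fun t => ∫ s in (0:ℝ)..a, |G t s|) '' Icc 0 a) M0)
    (ng : ℝ) (hng : IsGreatest ((fun t => |g t|) '' Icc 0 a) ng)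
    (f : ℝ → ℝ → ℝ → ℝ)
    (hfc : ContinuousOn (fun p : ℝ × ℝ × ℝ => f p.1 p.2.1 p.2.2)
      (Icc 0 a ×ˢ (univ : Set ℝ) ×ˢ (univ : Set ℝ)))
    (M : ℝ) (hM : 0 < M)
    (hbound : ∀ t ∈ Icc (0:ℝ) a, ∀ u v : ℝ,
      |u| ≤ ng + M0 * M → |v| ≤ ng + M0 * M → |f t u v| ≤ M)
    (L1 L2 : ℝ) (hL1 : 0 ≤ L1) (hL2 : 0 ≤ L2)
    (hLip : ∀ t ∈ Icc (0:ℝ) a, ∀ u1 u2 v1 v2 : ℝ,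
      |u1| ≤ ng + M0 * M → |u2| ≤ ng + M0 * M →
      |v1| ≤ ng + M0 * M → |v2| ≤ ng + M0 * M →
      |f t u2 v2 - f t u1 v1| ≤ L1 * |u2 - u1| + L2 * |v2 - v1|)
    (hq : (L1 + L2) * M0 < 1) :
    ∃ ψ : ℝ → ℝ,
      (ContinuousOn ψ (Icc 0 a) ∧
        (∀ t ∈ Icc (0:ℝ) a, |ψ t| ≤ M) ∧
        (∀ t ∈ Icc (0:ℝ) a, ψ t = f t (uOf a G g ψ t) (uOf a G g ψ (φ t)))) ∧
      (∀ ψ2 : ℝ → ℝ,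
        (ContinuousOn ψ2 (Icc 0 a) ∧
          (∀ t ∈ Icc (0:ℝ) a, |ψ2 t| ≤ M) ∧
          (∀ t ∈ Icc (0:ℝ) a, ψ2 t = f t (uOf a G g ψ2 t) (uOf a G g ψ2 (φ t)))) →
        EqOn ψ2 ψ (Icc 0 a)) ∧
      (∀ d : ℝ,
        IsGreatest
          ((fun t => |psiIter a G g f φ 1 t - psiIter a G g f φ 0 t|) '' Icc 0 a) d →
        ∀ k : ℕ, ∀ t ∈ Icc (0:ℝ) a,
          |psiIter a G g f φ k t - ψ t|
            ≤ ((L1 + L2) * M0) ^ k / (1 - (L1 + L2) * M0) * d) := by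
  have hM0_nonneg : 0 ≤ M0 := by
    obtain ⟨t, -, rfl⟩ := hM0.1
    exact intervalIntegral.integral_nonneg ha.le fun _ _ => abs_nonneg _
  have hng_nonneg : 0 ≤ ng := by
    obtain ⟨t, -, rfl⟩ := hng.1
    exact abs_nonneg _
  have hA := isContractionOnBall_opA ha.le hφc hφm hG hg
    (fun t ht => hM0.2 (mem_image_of_mem _ ht)) (fun t ht => hng.2 (mem_image_of_mem _ ht))
    hfc hbound hL1 hL2 hLip
  obtain ⟨ψ, hψ, hunique, hestimate⟩ :=
    hA.exists_fixedPoint hM.le (by positivity) hq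
  have hψ₀c : ContinuousOn (fun t => f t 0 0) (Icc 0 a) :=
    hfc.comp (continuousOn_id.prodMk (continuousOn_const (c := ((0:ℝ), (0:ℝ)))))
      fun t ht => ⟨ht, trivial, trivial⟩
  have hψ₀M : ∀ t ∈ Icc (0:ℝ) a, |f t 0 0| ≤ M := fun t ht =>
    have h0 : |(0:ℝ)| ≤ ng + M0 * M := by rw [abs_zero]; positivity
    hbound t ht 0 0 h0 h0
  refine ⟨ψ, hψ, hunique, fun d hd k t ht => ?_⟩
  rw [psiIter_eq_iterate_opA]
  exact hestimate _ hψ₀c hψ₀M d (fun t ht => hd.2 (mem_image_of_mem _ ht)) k t ht
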